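/- For each γ ∈ (0, √2) and each τ ∈ (0, D_γ), there exist p ∈ (1,2) and q ∈ (4/(1−τ), ∞) such that (p−1)(1 − γ²p/2) − τp/2 − p/q > 0. -/

import Mathlib

/-!
Write `(p - 1) (1 - γ² p / 2) - τ p / 2 = (p / 2) (φ(p) - τ)` with `φ(p) = tauBound γ p = 2 + γ² - γ² p - 2 / p`.
The concave function `φ` peaks at `p = √2 / γ` with value `(√2 - γ)²`; when this point leaves
`(1, 2)`, i.e. `γ ≤ √2 / 2`, its supremum over `(1, 2)` is `φ(2) = 1 - γ²`. So `D_γ` is exactly the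
supremum of `φ` over `(1, 2)`, and `τ < D_γ` yields `p ∈ (1, 2)` with `φ(p) > τ`. The remaining term
`p / q` is then made small by taking `q` large.
-/

open Filter Set Topology

noncomputable def Dgamma (γ : ℝ) : ℝ :=
  if γ < Real.sqrt 2 / 2 then 1 - γ ^ 2 else (Real.sqrt 2 - γ) ^ 2

/-- The largest `τ` for which the exponent `p` would work in the limit `q → ∞`. -/
noncomputable def tauBound (γ p : ℝ) : ℝ := 2 + γ ^ 2 - γ ^ 2 * p - 2 / p

lemma sub_one_mul_sub_sub_eq_mul_tauBound_sub {p : ℝ} (hp : p ≠ 0) (γ τ : ℝ) :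
    (p - 1) * (1 - γ ^ 2 * p / 2) - τ * p / 2 = p / 2 * (tauBound γ p - τ) := by
  unfold tauBound
  field_simp
  ring

lemma Dgamma_of_le {γ : ℝ} (hγ : γ ≤ Real.sqrt 2 / 2) : Dgamma γ = 1 - γ ^ 2 := by
  unfold Dgamma
  split_ifs with hlt
  · rfl
  · have h2 : Real.sqrt 2 ^ 2 = 2 := Real.sq_sqrt zero_le_two
    obtain rfl : γ = Real.sqrt 2 / 2 := le_antisymm hγ (not_lt.mp hlt)
    linear_combination (1 / 2 : ℝ) * h2

lemma Dgamma_of_lt {γ : ℝ} (hγ : Real.sqrt 2 / 2 < γ) : Dgamma γ = (Real.sqrt 2 - γ) ^ 2 :=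
  if_neg hγ.not_gt

lemma tauBound_sqrt_two_div (γ : ℝ) :
    tauBound γ (Real.sqrt 2 / γ) = (Real.sqrt 2 - γ) ^ 2 := by
  have h2 : Real.sqrt 2 ^ 2 = 2 := Real.sq_sqrt zero_le_two
  unfold tauBound
  field_simp
  linear_combination (γ - Real.sqrt 2) * h2

lemma exists_mem_Ioo_lt_tauBound_of_lt_one_sub_sq {γ τ : ℝ} (hτ : τ < 1 - γ ^ 2) :
    ∃ p ∈ Ioo (1 : ℝ) 2, τ < tauBound γ p := by
  have hcont : ContinuousAt (tauBound γ) 2 := by unfold tauBound; fun_prop (disch := norm_num)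
  have hlim : Tendsto (tauBound γ) (𝓝[<] 2) (𝓝 (1 - γ ^ 2)) := by
    have h : tauBound γ 2 = 1 - γ ^ 2 := by unfold tauBound; ring
    exact h ▸ hcont.tendsto.mono_left nhdsWithin_le_nhds
  have hIoo : ∀ᶠ p in 𝓝[<] (2 : ℝ), p ∈ Ioo (1 : ℝ) 2 := Ioo_mem_nhdsLT (by norm_num)
  exact (hIoo.and (hlim.eventually (lt_mem_nhds hτ))).exists

lemma exists_mem_Ioo_lt_tauBound {γ τ : ℝ} (hγ : γ < Real.sqrt 2) (hτ : τ < Dgamma γ) :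
    ∃ p ∈ Ioo (1 : ℝ) 2, τ < tauBound γ p := by
  rcases le_or_gt γ (Real.sqrt 2 / 2) with hle | hgt
  · exact exists_mem_Ioo_lt_tauBound_of_lt_one_sub_sq (Dgamma_of_le hle ▸ hτ)
  · have hγ0 : 0 < γ := lt_trans (by positivity) hgt
    refine ⟨Real.sqrt 2 / γ, ⟨(one_lt_div hγ0).mpr hγ, ?_⟩, ?_⟩
    · rw [div_lt_iff₀ hγ0]
      linarith
    · rwa [tauBound_sqrt_two_div γ, ← Dgamma_of_lt hgt]

lemma exists_gt_div_lt (a b : ℝ) {ε : ℝ} (hε : 0 < ε) : ∃ q, a < q ∧ b / q < ε :=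
  ((eventually_gt_atTop a).and
    ((tendsto_const_nhds.div_atTop tendsto_id).eventually (gt_mem_nhds hε))).exists

theorem exists_suitable_exponents (γ τ : ℝ)
    (hγ : γ ∈ Set.Ioo 0 (Real.sqrt 2)) (hτ : τ ∈ Set.Ioo 0 (Dgamma γ)) :
    ∃ p q : ℝ, p ∈ Set.Ioo (1 : ℝ) 2 ∧ 4 / (1 - τ) < q ∧
      (p - 1) * (1 - γ ^ 2 * p / 2) - τ * p / 2 - p / q > 0 := by
  obtain ⟨p, hp, hτp⟩ := exists_mem_Ioo_lt_tauBound hγ.2 hτ.2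
  have hp0 : 0 < p := one_pos.trans hp.1
  have hmargin : 0 < (p - 1) * (1 - γ ^ 2 * p / 2) - τ * p / 2 := by
    rw [sub_one_mul_sub_sub_eq_mul_tauBound_sub hp0.ne']
    exact mul_pos (half_pos hp0) (sub_pos.mpr hτp)
  obtain ⟨q, hq, hpq⟩ := exists_gt_div_lt (4 / (1 - τ)) p hmargin
  exact ⟨p, q, hp, hq, sub_pos.mpr hpq⟩
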